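/- Let c be a Grundy coloring of a finite simple graph G = (V,E), let S be a set of at most T edges on V disjoint from E, and let G' = (V, E ∪ S). Then every sequence of Grundy local search steps on G' started from the coloring c is finite (it reaches a Grundy coloring of G' after finitely many steps), at most T of its steps increase the color of the processed vertex, and consequently, at every point of the sequence, at most T vertices carry a color larger than their color under c. -/

import Mathlib

set_option linter.unusedSectionVars false

open scoped ENNReal

attribute [local instance] Classical.propDecidable

noncomputable section

namespace DGC

/-! ### Markov chains and expected hitting times -/

/-- `survive K A t s` is the probability that the Markov chain with transition kernel `K`,
started at `s`, has not visited the set `A` within its first `t` steps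
(time `0` counts: if `s ∈ A` the chain has hit `A` at time `0`). -/
def survive {S : Type*} (K : S → PMF S) (A : Set S) : ℕ → S → ℝ≥0∞
  | 0, s => if s ∈ A then 0 else 1
  | (t + 1), s => if s ∈ A then 0 else ∑' s', K s s' * survive K A t s'

/-- The expected hitting time of the set `A` for the Markov chain with kernel `K`
started at `s`; it equals `∑_{t ≥ 0} Pr[T > t]` where `T = min {t : X_t ∈ A}`, and it is `∞`
if `A` is reached with probability less than one. -/
def expectedHitting {S : Type*} (K : S → PMF S) (A : Set S) (s : S) : ℝ≥0∞ :=
  ∑' t, survive K A t s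

/-- `log⁺ T = max {1, ln T}`. -/
def logPlus (T : ℕ) : ℝ := max 1 (Real.log T)

variable {V : Type*} [Fintype V] [DecidableEq V]

/-! ### Colorings, conflicts -/

/-- A coloring (a map `V → ℕ`, colors being `1,2,3,…`) is proper if no edge is monochromatic. -/
def IsProper (G : SimpleGraph V) (c : V → ℕ) : Prop :=
  ∀ u v, G.Adj u v → c u ≠ c v

/-- The set of conflicting edges of the coloring `c`. -/
def conflictSet (G : SimpleGraph V) (c : V → ℕ) : Set (Sym2 V) :=
  {e | e ∈ G.edgeSet ∧ ∃ u v, e = s(u, v) ∧ c u = c v}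

/-- The number of conflicting edges of the coloring `c`. -/
def numConflicts (G : SimpleGraph V) (c : V → ℕ) : ℕ :=
  (conflictSet G c).ncard

/-- The set of proper 2-colorings (with color set `{1,2}`). -/
def properTwoColorings (G : SimpleGraph V) : Set (V → ℕ) :=
  {c | IsProper G c ∧ ∀ v, c v = 1 ∨ c v = 2}

/-- Vertices that are an endpoint of some conflicting edge. -/
def conflictVerts (G : SimpleGraph V) (c : V → ℕ) : Finset V :=
  Finset.univ.filter fun v => ∃ u, G.Adj v u ∧ c v = c u

/-! ### RLS and the (1+1) EA with `k = 2` colors (palette `{1,2}`) -/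

/-- Recolor vertex `v` with the unique other color of the palette `{1,2}`. -/
def flip (c : V → ℕ) (v : V) : V → ℕ := Function.update c v (3 - c v)

/-- One iteration of RLS with `k = 2` colors: choose a vertex `v` uniformly at random,
recolor it with the other color, and accept iff the number of conflicting edges
does not increase. -/
def rls2 (G : SimpleGraph V) (c : V → ℕ) : PMF (V → ℕ) :=
  if h : Nonempty V then
    (@PMF.uniformOfFintype V _ h).map fun v =>
      if numConflicts G (flip c v) ≤ numConflicts G c then flip c v else c
  else PMF.pure c

/-- Independent Bernoulli choices along a list of vertices. -/
def flipsAux (p : V → ℝ≥0∞) (h : ∀ v, p v ≤ 1) : List V → PMF (V → Bool)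
  | [] => PMF.pure fun _ => false
  | v :: vs =>
      (PMF.bernoulli (p v).toNNReal (by simpa using ENNReal.toNNReal_mono ENNReal.one_ne_top (h v))).bind fun b =>
        (flipsAux p h vs).map fun g => Function.update g v b

/-- A random subset of the vertices (as an indicator function), where each vertex `v` is
included independently with probability `p v`. -/
def flips (p : V → ℝ≥0∞) (h : ∀ v, p v ≤ 1) : PMF (V → Bool) :=
  flipsAux p h Finset.univ.toList

/-- `1/|V|` (or `0` for the empty graph). -/
def invCard (V : Type*) [Fintype V] : ℝ≥0∞ :=
  if 0 < Fintype.card V then (Fintype.card V : ℝ≥0∞)⁻¹ else 0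

lemma invCard_le_one : invCard V ≤ 1 := by
  unfold invCard
  split
  · rw [ENNReal.inv_le_one]
    exact_mod_cast ‹0 < Fintype.card V›
  · exact zero_le_one

lemma half_le_one : (1 / 2 : ℝ≥0∞) ≤ 1 := by
  rw [ENNReal.div_le_iff (by norm_num) (by norm_num)]
  norm_num

/-- Recolor (within the palette `{1,2}`) exactly the vertices selected by `bs`. -/
def mutate2 (c : V → ℕ) (bs : V → Bool) : V → ℕ := fun v => if bs v then 3 - c v else c v

/-- One iteration of the (1+1) EA with `k = 2` colors: every vertex is independently
recolored with probability `1/n`, and the offspring is accepted iff its number of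
conflicting edges is not larger. -/
def ea2 (G : SimpleGraph V) (c : V → ℕ) : PMF (V → ℕ) :=
  (flips (fun _ => invCard V) (fun _ => invCard_le_one)).map fun bs =>
    if numConflicts G (mutate2 c bs) ≤ numConflicts G c then mutate2 c bs else c

/-- One iteration of the tailored (1+1) EA with `k = 2` colors: every endpoint of a
conflicting edge is independently recolored with probability `1/2`, every other vertex with
probability `1/n`; the offspring is accepted iff its number of conflicting edges is
not larger. -/
def tailoredEA2 (G : SimpleGraph V) (c : V → ℕ) : PMF (V → ℕ) :=
  (flips (fun v => if v ∈ conflictVerts G c then 1 / 2 else invCard V)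
      (fun v => by split; exacts [half_le_one, invCard_le_one])).map fun bs =>
    if numConflicts G (mutate2 c bs) ≤ numConflicts G c then mutate2 c bs else c

/-- One iteration of the tailored RLS with `k = 2` colors: with probability `1/2` a vertex is
chosen uniformly at random among the endpoints of conflicting edges (if any exist), otherwise
uniformly at random among all vertices; it is recolored with the other color, and the move
is accepted iff the number of conflicting edges does not increase. -/
def tailoredRls2 (G : SimpleGraph V) (c : V → ℕ) : PMF (V → ℕ) :=
  if hV : Nonempty V then
    (PMF.bernoulli (1 / 2) (by norm_num)).bind fun coin =>
      (if h : coin = true ∧ (conflictVerts G c).Nonempty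
        then PMF.uniformOfFinset (conflictVerts G c) h.2
        else @PMF.uniformOfFintype V _ hV).map fun v =>
        if numConflicts G (flip c v) ≤ numConflicts G c then flip c v else c
  else PMF.pure c

/-! ### Grundy colorings and Grundy local search -/

/-- The smallest color (from `{1,2,3,…}`) not used by any neighbor of `v`. -/
def smallestFree (G : SimpleGraph V) (c : V → ℕ) (v : V) : ℕ :=
  sInf {i | 1 ≤ i ∧ ∀ u, G.Adj v u → c u ≠ i}

/-- A coloring is a Grundy coloring iff every vertex has the smallest color not used by any
of its neighbors (equivalently: it is proper, and every vertex `v` has, for every color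
`i < c v`, an `i`-colored neighbor). -/
def IsGrundy (G : SimpleGraph V) (c : V → ℕ) : Prop :=
  ∀ v, c v = smallestFree G c v

/-- One step of Grundy local search: some vertex whose color is not the smallest color absent
from its neighborhood is recolored with the smallest color not used by any of its neighbors. -/
def glsStep (G : SimpleGraph V) (c c' : V → ℕ) : Prop :=
  ∃ v, c v ≠ smallestFree G c v ∧ c' = Function.update c v (smallestFree G c v)

/-- `glsRun G c c'` holds iff `c'` is a possible outcome of a (maximal) run of Grundy local
search started at `c`: it is reachable from `c` by Grundy local search steps and is a
Grundy coloring. -/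
def glsRun (G : SimpleGraph V) (c c' : V → ℕ) : Prop :=
  Relation.ReflTransGen (glsStep G) c c' ∧ IsGrundy G c'

/-- The Grundy number of `G`: the largest color used by any Grundy coloring of `G`. -/
def grundyNumber (G : SimpleGraph V) : ℕ :=
  sSup {k | ∃ c v, IsGrundy G c ∧ c v = k}

/-! ### Kempe chains, color eliminations, and iterated local search -/

/-- The restriction of `G` to the vertex set `S` (an induced subgraph on the same
vertex type). -/
def restrict (G : SimpleGraph V) (S : Set V) : SimpleGraph V where
  Adj u w := G.Adj u w ∧ u ∈ S ∧ w ∈ S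
  symm := by constructor; intro u w h; exact ⟨h.1.symm, h.2.2, h.2.1⟩
  loopless := by constructor; intro u h; exact G.irrefl h.1

/-- `H_j(v)`: the connected component containing `v` of the subgraph of `G` induced by the
vertices colored `c v` or `j`. -/
def kempeSet (G : SimpleGraph V) (c : V → ℕ) (v : V) (j : ℕ) : Set V :=
  {u | (restrict G {w | c w = c v ∨ c w = j}).Reachable v u}

/-- The Kempe chain operation `(v, j)`: swap the colors `c v` and `j` on all vertices of
`H_j(v)`. -/
def kempeSwap (G : SimpleGraph V) (c : V → ℕ) (v : V) (j : ℕ) : V → ℕ := fun u =>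
  if u ∈ kempeSet G c v j then
    if c u = c v then j else if c u = j then c v else c u
  else c u

/-- The union `H_j(v₁) ∪ … ∪ H_j(v_ℓ)` over all `i`-colored neighbors `v₁, …, v_ℓ` of `v`. -/
def ceSet (G : SimpleGraph V) (c : V → ℕ) (v : V) (i j : ℕ) : Set V :=
  {u | ∃ w, G.Adj v w ∧ c w = i ∧ (restrict G {x | c x = i ∨ c x = j}).Reachable w u}

/-- The color elimination at `v` with colors `i, j`: swap colors `i` and `j` on
`H_j(v₁) ∪ … ∪ H_j(v_ℓ)`, where `v₁, …, v_ℓ` are the `i`-colored neighbors of `v`. -/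
def ceSwap (G : SimpleGraph V) (c : V → ℕ) (v : V) (i j : ℕ) : V → ℕ := fun u =>
  if u ∈ ceSet G c v i j then
    if c u = i then j else if c u = j then i else c u
  else c u

/-- `n_i(c)`: the number of `i`-colored vertices of the coloring `c`. -/
def colorCount (c : V → ℕ) (i : ℕ) : ℕ := (Finset.univ.filter fun v => c v = i).card

/-- The selection order `x ⪰ y`: `x` has fewer conflicting edges than `y`, or equally many
and the color frequencies satisfy `n_i(x) = n_i(y)` for all `i`, or `n_i(x) < n_i(y)` for the
largest index `i` with `n_i(x) ≠ n_i(y)`. -/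
def Pref (G : SimpleGraph V) (x y : V → ℕ) : Prop :=
  numConflicts G x < numConflicts G y ∨
    (numConflicts G x = numConflicts G y ∧
      ((∀ i, colorCount x i = colorCount y i) ∨
        ∃ i, colorCount x i < colorCount y i ∧ ∀ k, i < k → colorCount x k = colorCount y k))

/-- One iteration of ILS with Kempe chains, where `gls` is the (arbitrary, but fixed) rule
producing the outcome of a run of Grundy local search: choose `v` uniformly at random and
`j ∈ {1, …, deg(v) + 1}` uniformly at random, apply the Kempe chain operation `(v, j)`,
apply Grundy local search, and accept the result `z` iff `z ⪰ x`. -/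
def ilsKempe (G : SimpleGraph V) (gls : (V → ℕ) → (V → ℕ)) (x : V → ℕ) :
    PMF (V → ℕ) :=
  if hV : Nonempty V then
    (@PMF.uniformOfFintype V _ hV).bind fun v =>
      (PMF.uniformOfFinset (Finset.Icc 1 (G.degree v + 1))
          ⟨1, by simp only [Finset.mem_Icc]; omega⟩).map fun j =>
        let z := gls (kempeSwap G x v j)
        if Pref G z x then z else x
  else PMF.pure x

/-- The pairs of distinct colors `i ≠ j` with `i, j ∈ {1, …, c v − 1}`. -/
def cePairs (x : V → ℕ) (v : V) : Finset (ℕ × ℕ) :=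
  ((Finset.Icc 1 (x v - 1)) ×ˢ (Finset.Icc 1 (x v - 1))).filter fun p => p.1 ≠ p.2

lemma cePairs_nonempty {x : V → ℕ} {v : V} (h : 3 ≤ x v) : (cePairs x v).Nonempty :=
  ⟨(1, 2), by simp only [cePairs, Finset.mem_filter, Finset.mem_product, Finset.mem_Icc]; omega⟩

/-- One iteration of ILS with color eliminations, where `gls` is the (arbitrary, but fixed)
rule producing the outcome of a run of Grundy local search: choose `v` uniformly at random;
if `c v ≥ 3`, choose distinct `i, j ∈ {1, …, c v − 1}` uniformly at random and apply the
corresponding color elimination; apply Grundy local search, and accept the result `z`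
iff `z ⪰ x`. -/
def ilsCE (G : SimpleGraph V) (gls : (V → ℕ) → (V → ℕ)) (x : V → ℕ) :
    PMF (V → ℕ) :=
  if hV : Nonempty V then
    (@PMF.uniformOfFintype V _ hV).bind fun v =>
      if h : 3 ≤ x v then
        (PMF.uniformOfFinset (cePairs x v) (cePairs_nonempty h)).map fun p =>
          let z := gls (ceSwap G x v p.1 p.2)
          if Pref G z x then z else x
      else PMF.pure x
  else PMF.pure x


/-! ### Auxiliary lemmas for Statement 7 -/

lemma smallestFree_spec (G : SimpleGraph V) (x : V → ℕ) (v : V) :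
    1 ≤ smallestFree G x v ∧ ∀ u, G.Adj v u → x u ≠ smallestFree G x v := by
  have hne : {i | 1 ≤ i ∧ ∀ u, G.Adj v u → x u ≠ i}.Nonempty := by
    refine ⟨Finset.univ.sup x + 1, Nat.le_add_left 1 _, fun u _ h => ?_⟩
    have := Finset.le_sup (f := x) (Finset.mem_univ u)
    omega
  exact Nat.sInf_mem hne

lemma smallestFree_lt_used (G : SimpleGraph V) (x : V → ℕ) (v : V) {j : ℕ}
    (h1 : 1 ≤ j) (h2 : j < smallestFree G x v) : ∃ u, G.Adj v u ∧ x u = j := by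
  have hnm : j ∉ {i | 1 ≤ i ∧ ∀ u, G.Adj v u → x u ≠ i} := Nat.notMem_of_lt_sInf h2
  by_contra hcon
  push_neg at hcon
  exact hnm ⟨h1, fun u hu => hcon u hu⟩

lemma smallestFree_le_card (G : SimpleGraph V) (x : V → ℕ) (v : V) :
    smallestFree G x v ≤ Fintype.card V := by
  by_contra h
  push_neg at h
  have key : ∀ i ∈ Finset.Icc 1 (Fintype.card V), ∃ u, G.Adj v u ∧ x u = i := by
    intro i hi
    rw [Finset.mem_Icc] at hi
    exact smallestFree_lt_used G x v hi.1 (lt_of_le_of_lt hi.2 h)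
  classical
  set F : ℕ → V := fun i =>
    if hi : ∃ u, G.Adj v u ∧ x u = i then hi.choose else v with hF
  have hFadj : ∀ i ∈ Finset.Icc 1 (Fintype.card V), G.Adj v (F i) ∧ x (F i) = i := by
    intro i hi
    have hex := key i hi
    simp only [hF, dif_pos hex]
    exact hex.choose_spec
  have hmaps : ∀ i ∈ Finset.Icc 1 (Fintype.card V), F i ∈ Finset.univ.erase v := by
    intro i hi
    exact Finset.mem_erase.2 ⟨(hFadj i hi).1.ne', Finset.mem_univ _⟩
  have hinj : Set.InjOn F (Finset.Icc 1 (Fintype.card V)) := by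
    intro a ha b hb hab
    rw [← (hFadj a ha).2, hab, (hFadj b hb).2]
  have hcard := Finset.card_le_card_of_injOn F hmaps hinj
  rw [Nat.card_Icc, Finset.card_erase_of_mem (Finset.mem_univ v), Finset.card_univ] at hcard
  have hpos : 0 < Fintype.card V := Fintype.card_pos_iff.2 ⟨v⟩
  omega

lemma conflict_mono (G' : SimpleGraph V) (x : V → ℕ) (w : V) :
    conflictSet G' (Function.update x w (smallestFree G' x w)) ⊆ conflictSet G' x := by
  rintro e ⟨he, u, v, rfl, hcol⟩
  have hadj : G'.Adj u v := (SimpleGraph.mem_edgeSet _).1 he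
  refine ⟨he, u, v, rfl, ?_⟩
  by_cases hu : u = w
  · subst hu
    have hv : v ≠ u := hadj.ne'
    rw [Function.update_self, Function.update_of_ne hv] at hcol
    exact absurd hcol.symm ((smallestFree_spec G' x u).2 v hadj)
  · by_cases hv : v = w
    · subst hv
      rw [Function.update_self, Function.update_of_ne hu] at hcol
      exact absurd hcol ((smallestFree_spec G' x v).2 u hadj.symm)
    · rwa [Function.update_of_ne hu, Function.update_of_ne hv] at hcol

lemma conflict_ssub (G' : SimpleGraph V) (x : V → ℕ) (w : V)
    (hpos : 1 ≤ x w) (hinc : x w < smallestFree G' x w) :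
    conflictSet G' (Function.update x w (smallestFree G' x w)) ⊂ conflictSet G' x := by
  obtain ⟨u₀, hadj, hcol⟩ := smallestFree_lt_used G' x w hpos hinc
  refine ⟨conflict_mono G' x w, fun hsub => ?_⟩
  have hmem : s(w, u₀) ∈ conflictSet G' x :=
    ⟨(SimpleGraph.mem_edgeSet _).2 hadj, w, u₀, rfl, hcol.symm⟩
  obtain ⟨_, a, b, heq, hc⟩ := hsub hmem
  have hu0w : u₀ ≠ w := hadj.ne'
  rw [Sym2.eq_iff] at heq
  rcases heq with ⟨rfl, rfl⟩ | ⟨rfl, rfl⟩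
  · rw [Function.update_self, Function.update_of_ne hu0w] at hc
    omega
  · rw [Function.update_self, Function.update_of_ne hu0w] at hc
    omega

/-- Let `c` be a Grundy coloring of a finite simple graph `G = (V, E)`, let
`S` be a set of at most `T` edges on `V` disjoint from `E`, and let `G' = (V, E ∪ S)`. Then
every sequence of Grundy local search steps on `G'` started from `c` is finite (its length is
uniformly bounded; a maximal such sequence thus ends, after finitely many steps, in a coloring
admitting no further step, i.e. a Grundy coloring of `G'`), at most `T` of its steps increase
the color of the processed vertex, and at every point of the sequence at most `T` vertices
carry a color larger than their color under `c`. -/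
theorem stmt7 {V : Type*} [Fintype V] [DecidableEq V] (G : SimpleGraph V) (c : V → ℕ)
    (hc : IsGrundy G c) (T : ℕ) (S : Set (Sym2 V)) (hST : S.ncard ≤ T)
    (hdiag : ∀ e ∈ S, ¬ e.IsDiag) (hdisj : Disjoint S G.edgeSet)
    (G' : SimpleGraph V) (hG' : G' = SimpleGraph.fromEdgeSet (G.edgeSet ∪ S)) :
    (∃ M : ℕ, ∀ (m : ℕ) (f : ℕ → V → ℕ), f 0 = c →
        (∀ t < m, glsStep G' (f t) (f (t + 1))) → m ≤ M) ∧
    (∀ x : V → ℕ, (¬ ∃ y, glsStep G' x y) → IsGrundy G' x) ∧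
    (∀ (m : ℕ) (f : ℕ → V → ℕ), f 0 = c →
        (∀ t < m, glsStep G' (f t) (f (t + 1))) →
        ((Finset.range m).filter fun t => ∃ v, f t v < f (t + 1) v).card ≤ T ∧
        ∀ t ≤ m, {v | c v < f t v}.ncard ≤ T) := by
  classical
  set n := Fintype.card V with hn
  set Φ : (V → ℕ) → ℕ := fun x => numConflicts G' x * (n * n + 1) + ∑ v, x v with hΦ
  -- c is proper on G
  have hGprop : ∀ u v, G.Adj u v → c u ≠ c v := by
    intro u v huv heq
    have h1 : c v ≠ smallestFree G c u := (smallestFree_spec G c u).2 v huv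
    rw [← hc u] at h1
    exact h1 heq.symm
  -- initial conflicts are contained in S
  have hconf0 : conflictSet G' c ⊆ S := by
    rintro e ⟨he, u, v, rfl, hcol⟩
    rw [hG', SimpleGraph.edgeSet_fromEdgeSet] at he
    rcases he.1 with h | h
    · exact absurd hcol (hGprop u v ((SimpleGraph.mem_edgeSet _).1 h))
    · exact h
  have hC0 : numConflicts G' c ≤ T :=
    le_trans (Set.ncard_le_ncard hconf0 (Set.toFinite S)) hST
  have hpos0 : ∀ v, 1 ≤ c v := fun v => by
    rw [hc v]; exact (smallestFree_spec G c v).1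
  have hbnd0 : ∀ v, c v ≤ n := fun v => by
    rw [hc v]; exact smallestFree_le_card G c v
  have hΦ0 : Φ c ≤ T * (n * n + 1) + n * n := by
    have hSig : ∑ v, c v ≤ n * n := by
      calc ∑ v, c v ≤ ∑ _v : V, n := Finset.sum_le_sum fun v _ => hbnd0 v
        _ = n * n := by rw [Finset.sum_const, Finset.card_univ, smul_eq_mul]
    exact add_le_add (Nat.mul_le_mul_right _ hC0) hSig
  -- one-step facts
  have step_all : ∀ x x' : V → ℕ, (∀ v, 1 ≤ x v) → (∀ v, x v ≤ n) → glsStep G' x x' →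
      (∀ v, 1 ≤ x' v) ∧ (∀ v, x' v ≤ n) ∧
      numConflicts G' x' ≤ numConflicts G' x ∧
      ((∃ v, x v < x' v) → numConflicts G' x' < numConflicts G' x) ∧
      Φ x' < Φ x ∧
      ({v | c v < x v}.ncard + numConflicts G' x ≤ T →
        {v | c v < x' v}.ncard + numConflicts G' x' ≤ T) := by
    rintro x x' hpos hbnd ⟨w, hne, rfl⟩
    set k := smallestFree G' x w with hk
    have hpos' : ∀ v, 1 ≤ Function.update x w k v := by
      intro v
      by_cases hv : v = w
      · subst hv; rw [Function.update_self]; exact (smallestFree_spec G' x v).1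
      · rw [Function.update_of_ne hv]; exact hpos v
    have hbnd' : ∀ v, Function.update x w k v ≤ n := by
      intro v
      by_cases hv : v = w
      · subst hv; rw [Function.update_self]; exact smallestFree_le_card G' x v
      · rw [Function.update_of_ne hv]; exact hbnd v
    have hCm : numConflicts G' (Function.update x w k) ≤ numConflicts G' x :=
      Set.ncard_le_ncard (conflict_mono G' x w) (Set.toFinite _)
    have hCs : (∃ v, x v < Function.update x w k v) →
        numConflicts G' (Function.update x w k) < numConflicts G' x := by
      rintro ⟨v, hv⟩
      by_cases hvw : v = w
      · subst hvw
        rw [Function.update_self] at hv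
        exact Set.ncard_lt_ncard (conflict_ssub G' x v (hpos v) hv) (Set.toFinite _)
      · rw [Function.update_of_ne hvw] at hv; omega
    have h1 := Finset.sum_update_of_mem (Finset.mem_univ w) x k
    have h2 := Finset.add_sum_erase Finset.univ x (Finset.mem_univ w)
    rw [← Finset.erase_eq] at h1
    have hsum : (∑ v, Function.update x w k v) + x w = (∑ v, x v) + k := by
      rw [h1, ← h2]; ring
    have hkn : k ≤ n := smallestFree_le_card G' x w
    have hnn : n ≤ n * n := by nlinarith [hbnd w, hpos w]
    have hΦstep : Φ (Function.update x w k) < Φ x := by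
      simp only [hΦ]
      rcases hne.lt_or_gt with hlt | hlt
      · -- increasing step: conflicts strictly decrease
        have hC := hCs ⟨w, by rw [Function.update_self]; exact hlt⟩
        have hmul : (numConflicts G' (Function.update x w k) + 1) * (n * n + 1) ≤
            numConflicts G' x * (n * n + 1) := Nat.mul_le_mul_right _ (by omega)
        rw [add_mul, one_mul] at hmul
        have hxw := hpos w
        linarith
      · -- decreasing step
        have hmul : numConflicts G' (Function.update x w k) * (n * n + 1) ≤
            numConflicts G' x * (n * n + 1) := Nat.mul_le_mul_right _ hCm
        linarith
    refine ⟨hpos', hbnd', hCm, hCs, hΦstep, ?_⟩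
    intro hU
    by_cases hcase : c w < k ∧ x w ≤ c w
    · -- w newly enters the set of raised vertices, but conflicts strictly decrease
      have hC := hCs ⟨w, by rw [Function.update_self]; omega⟩
      have hsub : {v | c v < Function.update x w k v} ⊆ {v | c v < x v} ∪ {w} := by
        intro v hv
        by_cases hvw : v = w
        · exact Or.inr hvw
        · rw [Set.mem_setOf_eq, Function.update_of_ne hvw] at hv
          exact Or.inl hv
      have hle : {v | c v < Function.update x w k v}.ncard ≤ {v | c v < x v}.ncard + 1 := by
        calc {v | c v < Function.update x w k v}.ncard
            ≤ ({v | c v < x v} ∪ {w}).ncard := Set.ncard_le_ncard hsub (Set.toFinite _)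
          _ ≤ {v | c v < x v}.ncard + ({w} : Set V).ncard := Set.ncard_union_le _ _
          _ = {v | c v < x v}.ncard + 1 := by rw [Set.ncard_singleton]
      omega
    · -- the raised set does not grow
      have hsub : {v | c v < Function.update x w k v} ⊆ {v | c v < x v} := by
        intro v hv
        by_cases hvw : v = w
        · subst hvw
          rw [Set.mem_setOf_eq, Function.update_self] at hv
          rw [Set.mem_setOf_eq]
          omega
        · rwa [Set.mem_setOf_eq, Function.update_of_ne hvw] at hv
      have hle := Set.ncard_le_ncard hsub (Set.toFinite _)
      omega
  -- the main induction along a run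
  have main : ∀ (m : ℕ) (f : ℕ → V → ℕ), f 0 = c →
      (∀ t < m, glsStep G' (f t) (f (t + 1))) →
      ∀ t ≤ m, (∀ v, 1 ≤ f t v) ∧ (∀ v, f t v ≤ n) ∧
        ({v | c v < f t v}.ncard + numConflicts G' (f t) ≤ T) ∧
        (Φ (f t) + t ≤ Φ c) ∧
        (numConflicts G' (f t) +
          ((Finset.range t).filter fun s => ∃ v, f s v < f (s + 1) v).card ≤ T) := by
    intro m f hf0 hsteps t
    induction t with
    | zero =>
      intro _
      rw [hf0]
      refine ⟨hpos0, hbnd0, ?_, by omega, ?_⟩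
      · have : {v | c v < c v} = (∅ : Set V) := by
          ext v; simp
        rw [this, Set.ncard_empty]
        omega
      · simpa using hC0
    | succ t ih =>
      intro ht
      obtain ⟨hp, hb, hinv, hphi, hcnt⟩ := ih (by omega)
      obtain ⟨hp', hb', hCm, hCs, hphi', hinvstep⟩ :=
        step_all (f t) (f (t + 1)) hp hb (hsteps t (by omega))
      refine ⟨hp', hb', hinvstep hinv, by omega, ?_⟩
      rw [Finset.range_add_one, Finset.filter_insert]
      by_cases hc' : ∃ v, f t v < f (t + 1) v
      · rw [if_pos hc', Finset.card_insert_of_notMem (by simp)]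
        have := hCs hc'
        omega
      · rw [if_neg hc']
        omega
  refine ⟨⟨T * (n * n + 1) + n * n, ?_⟩, ?_, ?_⟩
  · intro m f hf0 hsteps
    have h := (main m f hf0 hsteps m le_rfl).2.2.2.1
    omega
  · intro x hx v
    by_contra hne
    exact hx ⟨Function.update x v (smallestFree G' x v), v, hne, rfl⟩
  · intro m f hf0 hsteps
    constructor
    · have := (main m f hf0 hsteps m le_rfl).2.2.2.2
      omega
    · intro t ht
      have := (main m f hf0 hsteps t ht).2.2.1
      omega
end DGC
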